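/- Let C_p denote the set of critical points of E₀ and, for μ ≥ 0, let S_μ^loc denote the set of local minimizers of E_μ. For every ε > 0 there exists δ > 0 such that for all μ with 0 ≤ μ < δ, every local minimizer X of E_μ satisfies inf_{Y ∈ C_p} ‖X − Y‖_F < ε. -/

import Mathlib

open Matrix
open scoped ComplexOrder

attribute [local instance] Matrix.frobeniusSeminormedAddCommGroup
  Matrix.frobeniusNormedAddCommGroup Matrix.frobeniusNormedSpace

/-- The OMM functional `E₀(X) = tr[(2I − X*X) X*HX]` (real-valued, since `H` is Hermitian). -/
noncomputable def E0 {N m : ℕ} (H : Matrix (Fin N) (Fin N) ℂ)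
    (X : Matrix (Fin N) (Fin m) ℂ) : ℝ :=
  (((2 : ℂ) • (1 : Matrix (Fin m) (Fin m) ℂ) - Xᴴ * X) * (Xᴴ * H * X)).trace.re

/-- The entrywise ℓ¹ norm `‖X‖₁ = Σ_{i,j} |X_{ij}|`. -/
noncomputable def l1 {N m : ℕ} (X : Matrix (Fin N) (Fin m) ℂ) : ℝ :=
  ∑ i, ∑ j, ‖X i j‖

/-- The penalized OMM functional `E_μ(X) = E₀(X) + μ‖X‖₁`. -/
noncomputable def Emu {N m : ℕ} (H : Matrix (Fin N) (Fin N) ℂ) (μ : ℝ)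
    (X : Matrix (Fin N) (Fin m) ℂ) : ℝ :=
  E0 H X + μ * l1 X

/-
A local minimizer `X` of `E_μ = E₀ + μ‖·‖₁` is an approximate critical point of `E₀`:
since `‖·‖₁` is Lipschitz, the one-sided Fermat rule along every direction gives
`‖DE₀(X)‖ ≤ μ · Lip(‖·‖₁)`. Approximate critical points are bounded, because with
`M = XX*` we have `DE₀(X) X = 4 tr(M(-H)M) - 4 tr(X*(-H)X) ≥ c‖X‖⁴ - C‖X‖²`
(both traces are homogeneous, and the quartic one is positive off `0` as `-H > 0`).
On a closed ball the continuous function `‖DE₀‖` has a positive lower bound `η` away from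
the `ε`-neighbourhood of the critical set; it then suffices to take `μ · Lip(‖·‖₁) < η`.
-/

open Filter Topology Metric Set
open scoped NNReal

section Homogeneous
variable {E : Type*} [NormedAddCommGroup E] [NormedSpace ℝ E] {q : E → ℝ} {n : ℕ}

theorem eq_norm_pow_mul_of_homogeneous (hq : ∀ (t : ℝ) x, q (t • x) = t ^ n * q x) {x : E}
    (hx : x ≠ 0) : q x = ‖x‖ ^ n * q (‖x‖⁻¹ • x) := by
  rw [← hq, smul_inv_smul₀ (norm_ne_zero_iff.mpr hx)]

theorem apply_zero_of_homogeneous (hn : n ≠ 0) (hq : ∀ (t : ℝ) x, q (t • x) = t ^ n * q x) :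
    q 0 = 0 := by
  simpa [zero_pow hn] using hq 0 0

variable [FiniteDimensional ℝ E]

theorem exists_pos_mul_norm_pow_le_of_homogeneous (hn : n ≠ 0) (hcont : Continuous q)
    (hq : ∀ (t : ℝ) x, q (t • x) = t ^ n * q x) (hpos : ∀ x ≠ 0, 0 < q x) :
    ∃ c > 0, ∀ x, c * ‖x‖ ^ n ≤ q x := by
  obtain ⟨c, hc, hcq⟩ := (isCompact_sphere (0 : E) 1).exists_forall_le' hcont.continuousOn
    fun u hu => hpos u (ne_zero_of_mem_sphere one_ne_zero ⟨u, hu⟩)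
  refine ⟨c, hc, fun x => ?_⟩
  rcases eq_or_ne x 0 with rfl | hx
  · simp [apply_zero_of_homogeneous hn hq, hn]
  · rw [eq_norm_pow_mul_of_homogeneous hq hx, mul_comm c]
    gcongr
    exact hcq _ (mem_sphere_zero_iff_norm.mpr (norm_smul_inv_norm hx))

theorem exists_le_mul_norm_pow_of_homogeneous (hn : n ≠ 0) (hcont : Continuous q)
    (hq : ∀ (t : ℝ) x, q (t • x) = t ^ n * q x) : ∃ C, ∀ x, q x ≤ C * ‖x‖ ^ n := by
  obtain ⟨C, hC⟩ := (isCompact_sphere (0 : E) 1).exists_bound_of_continuousOn hcont.continuousOn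
  refine ⟨C, fun x => ?_⟩
  rcases eq_or_ne x 0 with rfl | hx
  · simp [apply_zero_of_homogeneous hn hq, hn]
  · rw [eq_norm_pow_mul_of_homogeneous hq hx, mul_comm C]
    gcongr
    exact (le_abs_self _).trans
      (hC _ (mem_sphere_zero_iff_norm.mpr (norm_smul_inv_norm hx)))

end Homogeneous

theorem IsCompact.exists_pos_forall_norm_lt_infDist_lt {α F : Type*} [PseudoMetricSpace α]
    [NormedAddCommGroup F] {K : Set α} (hK : IsCompact K) {g : α → F} (hg : Continuous g)
    {ε : ℝ} (hε : 0 < ε) :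
    ∃ η > 0, ∀ x ∈ K, ‖g x‖ < η → infDist x {y | g y = 0} < ε := by
  set A := K ∩ {x | ε ≤ infDist x {y | g y = 0}}
  have hA : IsCompact A :=
    hK.inter_right (isClosed_le continuous_const (continuous_infDist_pt _))
  obtain ⟨η, hη, hηA⟩ := hA.exists_forall_le' hg.norm.continuousOn (a := 0) fun x hx =>
    norm_pos_iff.2 fun h0 =>
      hε.not_ge (hx.2.trans_eq (infDist_zero_of_mem (show x ∈ {y | g y = 0} from h0)))
  exact ⟨η, hη, fun x hx hlt => not_le.1 fun hεx => (hηA x ⟨hx, hεx⟩).not_gt hlt⟩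

section LocalMin
variable {E : Type*} [NormedAddCommGroup E] [NormedSpace ℝ E]

theorem IsLocalMin.norm_le_of_hasFDerivAt_add_mul {f p : E → ℝ} {f' : E →L[ℝ] ℝ} {x : E}
    {K : ℝ≥0} {μ : ℝ} (hmin : IsLocalMin (fun y => f y + μ * p y) x)
    (hf : HasFDerivAt f f' x) (hp : LipschitzWith K p) (hμ : 0 ≤ μ) : ‖f'‖ ≤ μ * K := by
  suffices h : ∀ v, -(μ * K * ‖v‖) ≤ f' v by
    refine f'.opNorm_le_bound (by positivity) fun v => abs_le.2 ⟨h v, ?_⟩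
    simpa using h (-v)
  intro v
  -- one-sided Fermat rule for `t ↦ f (x + t • v) + μ K ‖v‖ t` on `[0, ∞)`
  set g : ℝ → ℝ := fun t => f (x + t • v) + μ * K * ‖v‖ * t
  have hline : HasDerivAt (fun t : ℝ => x + t • v) v 0 := by
    simpa using ((hasDerivAt_id (0 : ℝ)).smul_const v).const_add x
  have hg : HasDerivWithinAt g (f' v + μ * K * ‖v‖) (Ici 0) 0 := by
    have hf0 : HasFDerivAt f f' (x + (0 : ℝ) • v) := by simpa using hf
    have hlin := (hasDerivAt_id (0 : ℝ)).const_mul (μ * K * ‖v‖) |>.congr_deriv (mul_one _)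
    exact ((hf0.comp_hasDerivAt 0 hline).add hlin).hasDerivWithinAt
  have hgmin : IsLocalMinOn g (Ici 0) 0 := by
    have hx : Tendsto (fun t : ℝ => x + t • v) (𝓝 0) (𝓝 x) := by
      simpa using hline.continuousAt.tendsto
    filter_upwards [nhdsWithin_le_nhds (hx.eventually hmin), self_mem_nhdsWithin]
      with t ht (ht0 : 0 ≤ t)
    have hlip := hp.le_add_mul (x + t • v) x
    simp only [dist_self_add_left, norm_smul, Real.norm_of_nonneg ht0] at hlip
    simp only [g, zero_smul, add_zero, mul_zero]
    nlinarith [mul_le_mul_of_nonneg_left hlip hμ]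
  have := hgmin.hasFDerivWithinAt_nonneg hg (y := 1)
    (mem_posTangentConeAt_of_segment_subset (by simp [segment_eq_Icc, Icc_subset_Ici_self]))
  simp only [ContinuousLinearMap.toSpanSingleton_apply, smul_eq_mul, one_mul] at this
  linarith

end LocalMin

section Coercive
variable {E : Type*} [NormedAddCommGroup E] [NormedSpace ℝ E] {f p : E → ℝ} {c C : ℝ}

theorem norm_le_of_norm_fderiv_le (hc : 0 < c)
    (hcoer : ∀ x, c * ‖x‖ ^ 4 - C * ‖x‖ ^ 2 ≤ fderiv ℝ f x x) {L : ℝ} {x : E}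
    (hL : ‖fderiv ℝ f x‖ ≤ L) : ‖x‖ ≤ max 1 ((C + L) / c) := by
  have hL0 : 0 ≤ L := (norm_nonneg _).trans hL
  have hx : c * ‖x‖ ^ 4 - C * ‖x‖ ^ 2 ≤ L * ‖x‖ :=
    calc _ ≤ fderiv ℝ f x x := hcoer x
      _ ≤ ‖fderiv ℝ f x‖ * ‖x‖ := (le_abs_self _).trans ((fderiv ℝ f x).le_opNorm x)
      _ ≤ L * ‖x‖ := by gcongr
  rcases le_or_gt ‖x‖ 1 with h1 | h1
  · exact le_max_of_le_left h1
  · have hsq : c * ‖x‖ ^ 2 * ‖x‖ ^ 2 ≤ (C + L) * ‖x‖ ^ 2 := by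
      nlinarith [mul_le_mul_of_nonneg_left h1.le (mul_nonneg hL0 (norm_nonneg x))]
    have hsq' := le_of_mul_le_mul_right hsq (by positivity)
    refine le_max_of_le_right ((le_div_iff₀ hc).2 ?_)
    nlinarith [mul_le_mul_of_nonneg_left h1.le (mul_nonneg hc.le (norm_nonneg x))]

variable [FiniteDimensional ℝ E]

theorem exists_pos_forall_isLocalMin_add_mul_infDist_lt {K : ℝ≥0} (hf : ContDiff ℝ 1 f)
    (hp : LipschitzWith K p) (hc : 0 < c)
    (hcoer : ∀ x, c * ‖x‖ ^ 4 - C * ‖x‖ ^ 2 ≤ fderiv ℝ f x x) {ε : ℝ} (hε : 0 < ε) :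
    ∃ δ > 0, ∀ μ : ℝ, 0 ≤ μ → μ < δ → ∀ x, IsLocalMin (fun y => f y + μ * p y) x →
      infDist x {y | fderiv ℝ f y = 0} < ε := by
  obtain ⟨η, hη, hηε⟩ := IsCompact.exists_pos_forall_norm_lt_infDist_lt
    (isCompact_closedBall (0 : E) (max 1 ((C + K) / c))) (hf.continuous_fderiv one_ne_zero) hε
  refine ⟨min 1 (η / (K + 1)), by positivity, fun μ hμ hμδ x hx => ?_⟩
  have hgrad := hx.norm_le_of_hasFDerivAt_add_mul
    ((hf.differentiable one_ne_zero x).hasFDerivAt) hp hμ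
  have hμ1 : μ ≤ 1 := hμδ.le.trans (min_le_left _ _)
  have hμη : μ * (K + 1) < η :=
    (lt_div_iff₀ (by positivity)).1 (hμδ.trans_le (min_le_right _ _))
  refine hηε x (mem_closedBall_zero_iff.2 (norm_le_of_norm_fderiv_le hc hcoer ?_)) ?_
  · exact hgrad.trans (mul_le_of_le_one_left K.coe_nonneg hμ1)
  · linarith

end Coercive

section MatrixCalculus
variable {l n p : Type*} [Fintype l] [Fintype n] [Fintype p] {𝕜 : Type*} [RCLike 𝕜]
  {E : Type*} [NormedAddCommGroup E] [NormedSpace ℝ E] {k : WithTop ℕ∞}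

theorem isBoundedBilinearMap_matrix_mul :
    IsBoundedBilinearMap ℝ fun A : Matrix l n 𝕜 × Matrix n p 𝕜 => A.1 * A.2 where
  add_left := Matrix.add_mul
  smul_left r A B := Matrix.smul_mul r A B
  add_right := Matrix.mul_add
  smul_right r A B := Matrix.mul_smul A r B
  bound := ⟨1, one_pos, fun A B => by simpa using Matrix.frobenius_norm_mul A B⟩

@[fun_prop]
theorem ContDiff.matrix_mul {f : E → Matrix l n 𝕜} {g : E → Matrix n p 𝕜}
    (hf : ContDiff ℝ k f) (hg : ContDiff ℝ k g) : ContDiff ℝ k fun x => f x * g x :=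
  (isBoundedBilinearMap_matrix_mul (𝕜 := 𝕜) (l := l) (n := n) (p := p)).contDiff.comp
    (hf.prodMk hg)

@[fun_prop]
theorem ContDiff.matrix_conjTranspose {f : E → Matrix l n 𝕜} (hf : ContDiff ℝ k f) :
    ContDiff ℝ k fun x => (f x)ᴴ :=
  ((conjTransposeAddEquiv l n 𝕜).toAddMonoidHom.toRealLinearMap
    continuous_id.matrix_conjTranspose).contDiff.comp hf

theorem contDiff_re_trace : ContDiff ℝ k fun A : Matrix n n 𝕜 => RCLike.re A.trace :=
  (LinearMap.toContinuousLinearMap (RCLike.reLm.comp (traceLinearMap n ℝ 𝕜))).contDiff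

theorem norm_entry_le_frobenius_norm {α : Type*} [SeminormedAddCommGroup α] (A : Matrix l n α)
    (i : l) (j : n) : ‖A i j‖ ≤ ‖A‖ :=
  (PiLp.norm_apply_le (WithLp.toLp 2 (A i)) j).trans
    (PiLp.norm_apply_le (WithLp.toLp 2 fun i => WithLp.toLp 2 (A i)) i)

end MatrixCalculus

section PosDef
variable {n p : Type*} [Fintype n] [Fintype p] {𝕜 : Type*} [RCLike 𝕜]

theorem Matrix.PosDef.re_trace_conjTranspose_mul_mul_pos {A : Matrix n n 𝕜} (hA : A.PosDef)
    {B : Matrix n p 𝕜} (hB : B ≠ 0) : 0 < RCLike.re (Bᴴ * A * B).trace := by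
  have hdiag (j : p) : (Bᴴ * A * B) j j = star (fun i => B i j) ⬝ᵥ A *ᵥ fun i => B i j := by
    rw [dotProduct_mulVec]; rfl
  obtain ⟨i, j, hij⟩ : ∃ i j, B i j ≠ 0 := by
    by_contra! h
    exact hB (Matrix.ext h)
  simp only [trace, diag, hdiag, map_sum]
  refine Finset.sum_pos' (fun j _ => hA.posSemidef.re_dotProduct_nonneg _)
    ⟨j, Finset.mem_univ _, hA.re_dotProduct_pos fun h => hij (congrFun h i)⟩

theorem re_trace_conjTranspose_smul_mul_smul (A : Matrix n n 𝕜) (B : Matrix n p 𝕜) (t : ℝ) :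
    RCLike.re ((t • B)ᴴ * A * (t • B)).trace = t ^ 2 * RCLike.re (Bᴴ * A * B).trace := by
  simp [conjTranspose_smul, trace_smul, sq, smul_mul, mul_assoc, RCLike.smul_re]

end PosDef

section OMM
variable {N m : ℕ}

theorem lipschitzWith_l1 : LipschitzWith (N * m) (l1 (N := N) (m := m)) := by
  refine LipschitzWith.of_le_add_mul _ fun X Y => ?_
  calc l1 X ≤ ∑ i, ∑ j, (‖Y i j‖ + dist X Y) :=
        Finset.sum_le_sum fun i _ => Finset.sum_le_sum fun j _ =>
          (norm_le_insert' (X i j) (Y i j)).trans (add_le_add le_rfl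
            ((norm_entry_le_frobenius_norm (X - Y) i j).trans_eq (dist_eq_norm X Y).symm))
    _ = l1 Y + (N * m : ℝ≥0) * dist X Y := by
        simp [l1, Finset.sum_add_distrib, mul_assoc]

theorem contDiff_E0 (H : Matrix (Fin N) (Fin N) ℂ) : ContDiff ℝ 1 (E0 (m := m) H) :=
  contDiff_re_trace (𝕜 := ℂ).comp (by fun_prop)

theorem E0_smul (H : Matrix (Fin N) (Fin N) ℂ) (X : Matrix (Fin N) (Fin m) ℂ) (s : ℝ) :
    E0 H (s • X) = 2 * s ^ 2 * (Xᴴ * H * X).trace.re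
      - s ^ 4 * (Xᴴ * X * (Xᴴ * H * X)).trace.re := by
  have hX : (s • X)ᴴ = s • Xᴴ := by simp [conjTranspose_smul]
  simp only [E0, hX, smul_mul, Matrix.mul_smul, sub_mul, smul_smul, trace_sub, trace_smul,
    Complex.sub_re, Complex.smul_re, Matrix.smul_mul, smul_eq_mul, Matrix.one_mul, ← mul_assoc,
    Complex.mul_re, Complex.re_ofNat, Complex.im_ofNat, zero_mul, sub_zero]
  ring

theorem fderiv_E0_apply_self (H : Matrix (Fin N) (Fin N) ℂ) (X : Matrix (Fin N) (Fin m) ℂ) :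
    fderiv ℝ (E0 H) X X =
      4 * (Xᴴ * H * X).trace.re - 4 * (Xᴴ * X * (Xᴴ * H * X)).trace.re := by
  -- differentiate `s ↦ E0 H (s • X)` at `s = 1` in two ways
  have hchain : HasDerivAt (fun s : ℝ => E0 H (s • X)) (fderiv ℝ (E0 H) X X) 1 := by
    have hE0 : HasFDerivAt (E0 H) (fderiv ℝ (E0 H) X) ((1 : ℝ) • X) := by
      rw [one_smul]
      exact ((contDiff_E0 H).differentiable one_ne_zero X).hasFDerivAt
    have h := hE0.comp_hasDerivAt 1 ((hasDerivAt_id (1 : ℝ)).smul_const X)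
    rw [one_smul] at h
    exact h
  have hpoly : HasDerivAt (fun s : ℝ => E0 H (s • X))
      (4 * (Xᴴ * H * X).trace.re - 4 * (Xᴴ * X * (Xᴴ * H * X)).trace.re) 1 := by
    simp_rw [E0_smul]
    exact ((((hasDerivAt_pow 2 (1 : ℝ)).const_mul 2).mul_const _).sub
      ((hasDerivAt_pow 4 (1 : ℝ)).mul_const _)).congr_deriv (by norm_num)
  exact hchain.unique hpoly

theorem exists_mul_norm_pow_four_sub_le_fderiv_E0 {H : Matrix (Fin N) (Fin N) ℂ}
    (hH : (-H).PosDef) :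
    ∃ c > 0, ∃ C, ∀ X : Matrix (Fin N) (Fin m) ℂ,
      c * ‖X‖ ^ 4 - C * ‖X‖ ^ 2 ≤ fderiv ℝ (E0 H) X X := by
  obtain ⟨C, hC⟩ := exists_le_mul_norm_pow_of_homogeneous
    (q := fun X : Matrix (Fin N) (Fin m) ℂ => RCLike.re (Xᴴ * -H * X).trace) two_ne_zero
    (by fun_prop) fun t X => re_trace_conjTranspose_smul_mul_smul _ X t
  obtain ⟨c, hc, hc'⟩ := exists_pos_mul_norm_pow_le_of_homogeneous
    (q := fun X : Matrix (Fin N) (Fin m) ℂ => RCLike.re ((X * Xᴴ)ᴴ * -H * (X * Xᴴ)).trace)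
    four_ne_zero (by fun_prop)
    (fun t X => by
      have hsmul : (t • X) * (t • X)ᴴ = t ^ 2 • (X * Xᴴ) := by
        simp [conjTranspose_smul, smul_smul, sq]
      rw [hsmul, re_trace_conjTranspose_smul_mul_smul]
      ring)
    fun X hX => hH.re_trace_conjTranspose_mul_mul_pos (self_mul_conjTranspose_eq_zero.not.2 hX)
  refine ⟨4 * c, by positivity, 4 * C, fun X => ?_⟩
  have hquad : (Xᴴ * H * X).trace.re = -RCLike.re (Xᴴ * -H * X).trace := by
    simp [trace_neg]
  have hquart : (Xᴴ * X * (Xᴴ * H * X)).trace.re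
      = -RCLike.re ((X * Xᴴ)ᴴ * -H * (X * Xᴴ)).trace := by
    rw [conjTranspose_mul, conjTranspose_conjTranspose, mul_neg, neg_mul, trace_neg, map_neg,
      neg_neg, RCLike.re_to_complex]
    simp only [Matrix.mul_assoc]
    rw [trace_mul_comm Xᴴ]
    simp only [Matrix.mul_assoc]
  rw [fderiv_E0_apply_self, hquad, hquart]
  linarith [hC X, hc' X]

end OMM

theorem stmt18_general {N m : ℕ}
    (H : Matrix (Fin N) (Fin N) ℂ) (hneg : (-H).PosDef) :
    ∀ ε > (0 : ℝ), ∃ δ > (0 : ℝ), ∀ μ : ℝ, 0 ≤ μ → μ < δ →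
      ∀ X : Matrix (Fin N) (Fin m) ℂ, IsLocalMin (Emu H μ) X →
        Metric.infDist X
          {Y : Matrix (Fin N) (Fin m) ℂ | fderiv ℝ (E0 H) Y = 0} < ε := by
  intro ε hε
  obtain ⟨c, hc, C, hcoer⟩ := exists_mul_norm_pow_four_sub_le_fderiv_E0 (m := m) hneg
  exact exists_pos_forall_isLocalMin_add_mul_infDist_lt (contDiff_E0 H) lipschitzWith_l1 hc hcoer
    hε

/-- Local minimizers of `E_μ` are generated by critical points of `E₀`: for every
`ε > 0` there is `δ > 0` such that for `0 ≤ μ < δ`, every local minimizer of `E_μ`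
is within `ε` of the critical set of `E₀`. -/
theorem stmt18 {N m : ℕ} (hN : 0 < N) (hm : 0 < m) (hmN : m ≤ N)
    (H : Matrix (Fin N) (Fin N) ℂ) (hH : H.IsHermitian) (hneg : (-H).PosDef) :
    ∀ ε > (0 : ℝ), ∃ δ > (0 : ℝ), ∀ μ : ℝ, 0 ≤ μ → μ < δ →
      ∀ X : Matrix (Fin N) (Fin m) ℂ, IsLocalMin (Emu H μ) X →
        Metric.infDist X
          {Y : Matrix (Fin N) (Fin m) ℂ | fderiv ℝ (E0 H) Y = 0} < ε :=
  stmt18_general H hneg
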